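/- arXiv:2304.07268 — 4 statements merged into one kernel-verified Lean document; each statement's English description precedes it below -/
import Mathlib

section
/- (Multiplicative Chernoff bound.) Let X_1, …, X_n be independent random variables with values in {0,1}. Let X = Σ_{i=1}^n X_i, let μ = E[X], and let δ ≥ 0 be a real. Then P(X ≥ μ(1+δ)) ≤ exp(−δ²μ/(2+δ)). -/
open MeasureTheory ProbabilityTheory Real
open scoped ENNReal

/-!
Chernoff's method with `t = log (1 + δ)`: a `{0,1}`-valued variable satisfies
`exp (t X) = 1 + (eᵗ - 1) X`, so its moment generating function is
`1 + (eᵗ - 1) E[X] ≤ exp ((eᵗ - 1) E[X])`. By independence the mgf of the sum is at most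
`exp (δ m)`, and Markov's inequality for `exp (t S)` bounds the tail by
`exp (m (δ - (1 + δ) log (1 + δ)))`. The estimate `log (1 + δ) ≥ 2δ / (2 + δ)` turns this
exponent into `-δ² m / (2 + δ)`.
-/

lemma exp_mul_of_eq_zero_or_eq_one {x : ℝ} (hx : x = 0 ∨ x = 1) (t : ℝ) :
    exp (t * x) = 1 + (exp t - 1) * x := by
  rcases hx with rfl | rfl <;> simp

lemma mul_sub_mul_log_one_add_le {δ m : ℝ} (hδ : 0 ≤ δ) (hm : 0 ≤ m) :
    m * (δ - (1 + δ) * log (1 + δ)) ≤ -(δ ^ 2 * m) / (2 + δ) := by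
  have hlog : 2 * δ / (2 + δ) ≤ log (1 + δ) := by
    simpa only [add_comm δ] using le_log_one_add_of_nonneg hδ
  calc m * (δ - (1 + δ) * log (1 + δ))
      ≤ m * (δ - (1 + δ) * (2 * δ / (2 + δ))) := by gcongr
    _ = -(δ ^ 2 * m) / (2 + δ) := by field_simp; ring

section ZeroOne

variable {Ω : Type*} [MeasurableSpace Ω] {μ : Measure Ω} {X : Ω → ℝ}

lemma integrable_of_eq_zero_or_eq_one [IsFiniteMeasure μ] (hmeas : Measurable X)
    (hX : ∀ ω, X ω = 0 ∨ X ω = 1) : Integrable X μ := by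
  refine (integrable_const (1 : ℝ)).mono' hmeas.aestronglyMeasurable (.of_forall fun ω => ?_)
  rcases hX ω with h | h <;> simp [h]

lemma mgf_of_eq_zero_or_eq_one [IsProbabilityMeasure μ] (hmeas : Measurable X)
    (hX : ∀ ω, X ω = 0 ∨ X ω = 1) (t : ℝ) :
    mgf X μ t = 1 + (exp t - 1) * μ[X] := by
  have hXint := integrable_of_eq_zero_or_eq_one (μ := μ) hmeas hX
  simp only [mgf, exp_mul_of_eq_zero_or_eq_one (hX _)]
  rw [integral_add (integrable_const _) (hXint.const_mul _), integral_const_mul]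
  simp

lemma mgf_le_exp_of_eq_zero_or_eq_one [IsProbabilityMeasure μ] (hmeas : Measurable X)
    (hX : ∀ ω, X ω = 0 ∨ X ω = 1) (t : ℝ) :
    mgf X μ t ≤ exp ((exp t - 1) * μ[X]) := by
  rw [mgf_of_eq_zero_or_eq_one hmeas hX, add_comm]
  exact add_one_le_exp _

end ZeroOne

namespace ProbabilityTheory

variable {Ω ι : Type*} [MeasurableSpace Ω] {μ : Measure Ω} [IsProbabilityMeasure μ]
  [Fintype ι] {X : ι → Ω → ℝ}

lemma iIndepFun.mgf_sum_le_exp_of_eq_zero_or_eq_one (hindep : iIndepFun X μ)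
    (hmeas : ∀ i, Measurable (X i)) (hX : ∀ i ω, X i ω = 0 ∨ X i ω = 1) (t : ℝ) :
    mgf (∑ i, X i) μ t ≤ exp ((exp t - 1) * μ[∑ i, X i]) := by
  simp only [Finset.sum_apply]
  rw [hindep.mgf_sum hmeas, integral_finsetSum _ fun i _ =>
    integrable_of_eq_zero_or_eq_one (hmeas i) (hX i), Finset.mul_sum, exp_sum]
  exact Finset.prod_le_prod (fun i _ => mgf_nonneg)
    fun i _ => mgf_le_exp_of_eq_zero_or_eq_one (hmeas i) (hX i) t

lemma iIndepFun.measureReal_le_sum_le_of_eq_zero_or_eq_one (hindep : iIndepFun X μ)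
    (hmeas : ∀ i, Measurable (X i)) (hX : ∀ i ω, X i ω = 0 ∨ X i ω = 1)
    (a : ℝ) {t : ℝ} (ht : 0 ≤ t) :
    μ.real {ω | a ≤ ∑ i, X i ω} ≤ exp (-t * a + (exp t - 1) * μ[∑ i, X i]) := by
  have hint : Integrable (fun ω => exp (t * (∑ i, X i) ω)) μ :=
    hindep.integrable_exp_mul_sum hmeas fun i _ => by
      simp only [exp_mul_of_eq_zero_or_eq_one (hX i _)]
      exact (integrable_const _).add
        ((integrable_of_eq_zero_or_eq_one (hmeas i) (hX i)).const_mul _)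
  calc μ.real {ω | a ≤ ∑ i, X i ω}
      = μ.real {ω | a ≤ (∑ i, X i) ω} := by simp only [Finset.sum_apply]
    _ ≤ exp (-t * a) * mgf (∑ i, X i) μ t := measure_ge_le_exp_mul_mgf a ht hint
    _ ≤ exp (-t * a) * exp ((exp t - 1) * μ[∑ i, X i]) := by
        gcongr; exact hindep.mgf_sum_le_exp_of_eq_zero_or_eq_one hmeas hX t
    _ = exp (-t * a + (exp t - 1) * μ[∑ i, X i]) := (exp_add _ _).symm

end ProbabilityTheory

/-- **Multiplicative Chernoff bound.** Let `X 1, …, X n` be independent random variables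
with values in `{0,1}`, let `S = ∑ i, X i`, let `m = E[S]`, and let `δ ≥ 0`. Then
`P(S ≥ m (1 + δ)) ≤ exp (-δ² m / (2 + δ))`. -/
theorem multiplicative_chernoff_bound
    {Ω : Type*} [MeasurableSpace Ω] (μ : Measure Ω) [IsProbabilityMeasure μ]
    {n : ℕ} (X : Fin n → Ω → ℝ)
    (hmeas : ∀ i, Measurable (X i))
    (hval : ∀ i ω, X i ω = 0 ∨ X i ω = 1)
    (hindep : iIndepFun X μ)
    (δ : ℝ) (hδ : 0 ≤ δ)
    (m : ℝ) (hm : m = μ[fun ω => ∑ i, X i ω]) :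
    μ {ω | m * (1 + δ) ≤ ∑ i, X i ω} ≤
      ENNReal.ofReal (Real.exp (-(δ ^ 2 * m) / (2 + δ))) := by
  have hm_sum : m = μ[∑ i, X i] := by simp only [hm, Finset.sum_fn]
  have hm_nonneg : 0 ≤ m :=
    hm ▸ integral_nonneg fun ω => Finset.sum_nonneg fun i _ => by
      rcases hval i ω with h | h <;> simp [h]
  have htail := hindep.measureReal_le_sum_le_of_eq_zero_or_eq_one hmeas hval (m * (1 + δ))
    (log_nonneg (by linarith : (1 : ℝ) ≤ 1 + δ))
  rw [← hm_sum, exp_log (by linarith)] at htail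
  rw [← ofReal_measureReal]
  refine ENNReal.ofReal_le_ofReal (htail.trans (exp_le_exp.mpr ?_))
  linarith [mul_sub_mul_log_one_add_le hδ hm_nonneg]
end

section
/- Let k ≥ 1 be an integer and let X_1, X_2, … be independent random variables with values in {−1, 1} such that for every i ≥ 1, P(X_i = 1) ≤ 1/8. Let Z be the random variable defined as the minimum index i such that k + Σ_{j=1}^{i} X_j < 0. Then P(Z > 2k) ≤ exp(−k/12). -/
open MeasureTheory ProbabilityTheory Real
open scoped ENNReal

/-!
Only the endpoint `i = 2k` matters: the event forces `∑_{j ≤ 2k} X j ≥ -k`, and an exponential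
Chernoff bound with `e^t = 3/2` gives `P(∑ X j ≥ -k) ≤ (3/2)^k (37/48)^(2k) ≤ (11/12)^k ≤ e^(-k/12)`,
since by independence each step contributes `E e^(t X j) ≤ 2/3 + (3/2 - 2/3)/8 = 37/48`.
-/

section SignVariables

variable {Ω : Type*} [MeasurableSpace Ω] {μ : Measure Ω}

lemma exp_mul_eq_of_sign (t : ℝ) {y : ℝ} (hy : y = -1 ∨ y = 1) :
    exp (t * y) = exp (-t) + ({1} : Set ℝ).indicator (fun _ => exp t - exp (-t)) y := by
  rcases hy with rfl | rfl <;> norm_num [Set.indicator]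

lemma mgf_of_sign [IsProbabilityMeasure μ] {Y : Ω → ℝ} (hY : Measurable Y)
    (hval : ∀ ω, Y ω = -1 ∨ Y ω = 1) (t : ℝ) :
    mgf Y μ t = exp (-t) + (exp t - exp (-t)) * μ.real {ω | Y ω = 1} := by
  have hset : MeasurableSet {ω | Y ω = 1} := hY (measurableSet_singleton 1)
  have hexp : (fun ω => exp (t * Y ω)) =
      fun ω => exp (-t) + {ω | Y ω = 1}.indicator (fun _ => exp t - exp (-t)) ω := by
    ext ω
    rw [exp_mul_eq_of_sign t (hval ω)]
    rfl
  rw [mgf, hexp, integral_add (integrable_const _) ((integrable_const _).indicator hset),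
    integral_const, integral_indicator_const _ hset]
  simp [mul_comm]

lemma mgf_le_of_sign [IsProbabilityMeasure μ] {Y : Ω → ℝ} (hY : Measurable Y)
    (hval : ∀ ω, Y ω = -1 ∨ Y ω = 1) {t p : ℝ} (ht : 0 ≤ t) (hp : μ.real {ω | Y ω = 1} ≤ p) :
    mgf Y μ t ≤ exp (-t) + (exp t - exp (-t)) * p := by
  rw [mgf_of_sign hY hval t]
  gcongr
  linarith [exp_le_exp.2 (show -t ≤ t by linarith)]

lemma integrable_exp_mul_of_sign [IsFiniteMeasure μ] {Y : Ω → ℝ} (hY : Measurable Y)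
    (hval : ∀ ω, Y ω = -1 ∨ Y ω = 1) (t : ℝ) :
    Integrable (fun ω => exp (t * Y ω)) μ := by
  refine (integrable_const (exp |t|)).mono' (by fun_prop)
    (Filter.Eventually.of_forall fun ω => ?_)
  rw [norm_of_nonneg (exp_pos _).le, exp_le_exp]
  rcases hval ω with h | h <;> simp [h, neg_le_abs, le_abs_self]

theorem measure_sum_ge_le_of_sign [IsProbabilityMeasure μ] {ι : Type*} {X : ι → Ω → ℝ}
    (hmeas : ∀ i, Measurable (X i)) (hval : ∀ i ω, X i ω = -1 ∨ X i ω = 1)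
    (hindep : iIndepFun X μ) {s : Finset ι} {p : ℝ} (hp : ∀ i ∈ s, μ.real {ω | X i ω = 1} ≤ p)
    {t : ℝ} (ht : 0 ≤ t) (a : ℝ) :
    μ.real {ω | a ≤ ∑ i ∈ s, X i ω} ≤
      exp (-t * a) * (exp (-t) + (exp t - exp (-t)) * p) ^ s.card := by
  have hint := hindep.integrable_exp_mul_sum (t := t) hmeas
    (s := s) fun i _ => integrable_exp_mul_of_sign (hmeas i) (hval i) t
  have hmgf : mgf (∑ i ∈ s, X i) μ t ≤ (exp (-t) + (exp t - exp (-t)) * p) ^ s.card := by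
    rw [hindep.mgf_sum hmeas]
    exact (Finset.prod_le_prod (fun _ _ => mgf_nonneg)
      fun i hi => mgf_le_of_sign (hmeas i) (hval i) ht (hp i hi)).trans_eq (Finset.prod_const _)
  have := measure_ge_le_exp_mul_mgf a ht hint
  simp only [Finset.sum_apply] at this
  exact this.trans (by gcongr)

end SignVariables

lemma three_halves_pow_mul_le_exp (k : ℕ) :
    (3 / 2 : ℝ) ^ k * (37 / 48) ^ (2 * k) ≤ exp (-(k : ℝ) / 12) := by
  calc (3 / 2 : ℝ) ^ k * (37 / 48) ^ (2 * k) = (3 / 2 * (37 / 48) ^ 2) ^ k := by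
        rw [mul_pow, pow_mul]
    _ ≤ (1 + -1 / 12) ^ k := by gcongr; norm_num
    _ ≤ exp (-1 / 12) ^ k := by
        gcongr
        linarith [add_one_le_exp (-1 / 12 : ℝ)]
    _ = exp (-(k : ℝ) / 12) := by rw [← exp_nat_mul]; ring_nf

/-- Let `k ≥ 1` and let `X 1, X 2, …` be independent random variables with values in
`{-1, 1}` such that `P(X i = 1) ≤ 1/8` for every `i ≥ 1`. Let `Z` be the minimum index
`i` such that `k + ∑_{j=1}^{i} X j < 0`. Then `P(Z > 2k) ≤ exp (-k/12)`; here the event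
`Z > 2k` is expressed directly as "for every `1 ≤ i ≤ 2k` we have `k + ∑_{j=1}^{i} X j ≥ 0`",
which in particular covers the case that no such index `i` exists at all. -/
theorem hit_process_bound
    {Ω : Type*} [MeasurableSpace Ω] (μ : Measure Ω) [IsProbabilityMeasure μ]
    (k : ℕ) (hk : 1 ≤ k)
    (X : ℕ → Ω → ℝ)
    (hmeas : ∀ i, Measurable (X i))
    (hval : ∀ i ω, X i ω = -1 ∨ X i ω = 1)
    (hindep : iIndepFun X μ)
    (hp : ∀ i, 1 ≤ i → μ {ω | X i ω = 1} ≤ ENNReal.ofReal (1 / 8)) :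
    μ {ω | ∀ i, 1 ≤ i → i ≤ 2 * k → 0 ≤ (k : ℝ) + ∑ j ∈ Finset.Icc 1 i, X j ω} ≤
      ENNReal.ofReal (Real.exp (-(k : ℝ) / 12)) := by
  have hp_real : ∀ i ∈ Finset.Icc 1 (2 * k), μ.real {ω | X i ω = 1} ≤ 1 / 8 := fun i hi =>
    ENNReal.toReal_le_of_le_ofReal (by norm_num) (hp i (Finset.mem_Icc.1 hi).1)
  have hchernoff := measure_sum_ge_le_of_sign hmeas hval hindep hp_real
    (log_nonneg (by norm_num : (1 : ℝ) ≤ 3 / 2)) (-k)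
  have hrate : exp (-log (3 / 2) * -k) * (exp (-log (3 / 2)) +
      (exp (log (3 / 2)) - exp (-log (3 / 2))) * (1 / 8)) ^ (Finset.Icc 1 (2 * k)).card =
      (3 / 2 : ℝ) ^ k * (37 / 48) ^ (2 * k) := by
    rw [neg_mul_neg, mul_comm (log _), exp_nat_mul, exp_neg, exp_log (by norm_num), Nat.card_Icc,
      Nat.add_sub_cancel]
    norm_num
  calc μ {ω | ∀ i, 1 ≤ i → i ≤ 2 * k → 0 ≤ (k : ℝ) + ∑ j ∈ Finset.Icc 1 i, X j ω}
      ≤ μ {ω | -(k : ℝ) ≤ ∑ j ∈ Finset.Icc 1 (2 * k), X j ω} := by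
        refine measure_mono fun ω hω => ?_
        have := hω (2 * k) (by omega) le_rfl
        simp only [Set.mem_ofPred_eq]
        linarith
    _ = ENNReal.ofReal (μ.real {ω | -(k : ℝ) ≤ ∑ j ∈ Finset.Icc 1 (2 * k), X j ω}) :=
        (ofReal_measureReal).symm
    _ ≤ ENNReal.ofReal (exp (-(k : ℝ) / 12)) :=
        ENNReal.ofReal_le_ofReal
          (hchernoff.trans (hrate.trans_le (three_halves_pow_mul_le_exp k)))
end

section
/- Let n be a positive integer, let X_1, X_2, …, X_{2n} be independent random variables each with distribution Exp(1), let f_1, …, f_{2n} be measurable functions where f_i : ℝ^{i−1} → ℝ_{≥0} ∪ {+∞} for 1 ≤ i ≤ 2n and f_i ≡ 0 for n < i ≤ 2n, and let p ≥ 0 be a real. Call an index i good if X_i ≥ f_i(X_1, …, X_{i−1}), and excellent if additionally X_i > f_i(X_1, …, X_{i−1}) + p. Let N ∈ {n, n+1, …, 2n} be the number of good indices (every i > n is good almost surely), and let I_1 < I_2 < … < I_N be the consecutive good indices. For 1 ≤ i ≤ N let Y_i = X_{I_i} − f_{I_i}(X_1, …, X_{I_i−1}). Then Y_1, Y_2,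 …, Y_n are independent random variables, each with distribution Exp(1). Consequently, if for 1 ≤ i ≤ n we denote by A_i the event that the index I_i is excellent, then the events A_1, …, A_n are independent and each happens with probability e^{−p}. -/
open MeasureTheory ProbabilityTheory Real
open scoped ENNReal Classical

/-- The index `i : Fin (2*n)` is *good* at the sample point `ω`:
`X i ≥ f i (X_1, …, X_{i-1})` (with values of `f` taken in `ℝ≥0 ∪ {+∞} = ℝ≥0∞`). -/
def goodIdx {Ω : Type*} {n : ℕ} (X : Fin (2 * n) → Ω → ℝ)
    (f : (i : Fin (2 * n)) → (Fin i.val → ℝ) → ℝ≥0∞) (ω : Ω) (i : Fin (2 * n)) : Prop :=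
  f i (fun j => X ⟨j.val, j.isLt.trans i.isLt⟩ ω) ≤ ENNReal.ofReal (X i ω)

/-- The index `i : Fin (2*n)` is *excellent* at `ω`: `X i > f i (X_1, …, X_{i-1}) + p`. -/
def excellentIdx {Ω : Type*} {n : ℕ} (X : Fin (2 * n) → Ω → ℝ)
    (f : (i : Fin (2 * n)) → (Fin i.val → ℝ) → ℝ≥0∞) (p : ℝ) (ω : Ω) (i : Fin (2 * n)) : Prop :=
  f i (fun j => X ⟨j.val, j.isLt.trans i.isLt⟩ ω) + ENNReal.ofReal p < ENNReal.ofReal (X i ω)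

/-!
Reveal `X_1, X_2, …` one at a time. Given the past, index `i` is good iff `X_i` exceeds the
threshold `t = f_i(X_1, …, X_{i-1})`, and by memorylessness of `Exp(1)` the residual `X_i - t`
of a good index is again `Exp(1)`, independent of the past. Conditioning on `X_1` and passing the
threshold rule on to the remaining coordinates, an induction on the number of coordinates shows
that the first `k` residuals of good indices are i.i.d. `Exp(1)`, provided the last `k` indices
are always good. The excellent indices among the `I_i` are those with `Y_i > p`.
-/

open Set

section Exponential

variable {r : ℝ}

lemma expMeasure_apply {S : Set ℝ} (hS : MeasurableSet S) :
    expMeasure r S = ∫⁻ x in S, exponentialPDF r x :=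
  withDensity_apply _ hS

theorem expMeasure_memoryless {t : ℝ} (ht : 0 ≤ t) {B : Set ℝ} (hB : MeasurableSet B) :
    expMeasure r {x | t ≤ x ∧ x - t ∈ B} = ENNReal.ofReal (exp (-(r * t))) * expMeasure r B := by
  have hA : MeasurableSet {x : ℝ | t ≤ x ∧ x - t ∈ B} :=
    measurableSet_Ici.inter (measurable_sub_const t hB)
  rw [expMeasure_apply hA, expMeasure_apply hB, ← lintegral_indicator hA, ← lintegral_indicator hB,
    ← lintegral_add_right_eq_self _ t, ← lintegral_const_mul' _ _ ENNReal.ofReal_ne_top]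
  congr 1 with y
  by_cases hy : 0 ≤ y
  · by_cases hyB : y ∈ B
    · have hyA : y + t ∈ {x : ℝ | t ≤ x ∧ x - t ∈ B} := ⟨by linarith, by simpa using hyB⟩
      rw [indicator_of_mem hyA, indicator_of_mem hyB, exponentialPDF_of_nonneg (by linarith),
        exponentialPDF_of_nonneg hy, ← ENNReal.ofReal_mul (exp_nonneg _),
        show -(r * (y + t)) = -(r * t) + -(r * y) by ring, exp_add]
      ring_nf
    · have hyA : y + t ∉ {x : ℝ | t ≤ x ∧ x - t ∈ B} := fun h => hyB (by simpa using h.2)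
      rw [indicator_of_notMem hyA, indicator_of_notMem hyB, mul_zero]
  · have hyA : y + t ∉ {x : ℝ | t ≤ x ∧ x - t ∈ B} := fun h => hy (by linarith [h.1])
    rw [indicator_of_notMem hyA, indicator_apply, exponentialPDF_of_neg (not_le.mp hy)]
    simp

theorem expMeasure_memoryless_ennreal (hr : 0 < r) (c : ℝ≥0∞) {B : Set ℝ}
    (hB : MeasurableSet B) :
    expMeasure r {x | c ≤ ENNReal.ofReal x ∧ x - c.toReal ∈ B} =
      expMeasure r {x | c ≤ ENNReal.ofReal x} * expMeasure r B := by
  have := isProbabilityMeasure_expMeasure hr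
  rcases eq_or_ne c 0 with rfl | hc0
  · simp
  rcases eq_or_ne c ⊤ with rfl | hctop
  · simp
  have ht : 0 < c.toReal := ENNReal.toReal_pos hc0 hctop
  have hle : ∀ x, c ≤ ENNReal.ofReal x ↔ c.toReal ≤ x := fun x => by
    rw [← ENNReal.ofReal_toReal hctop, ENNReal.ofReal_le_ofReal_iff', ENNReal.toReal_ofReal ht.le]
    simp [ht.not_ge]
  have hIci := expMeasure_memoryless (r := r) ht.le MeasurableSet.univ
  simp only [mem_univ, and_true, measure_univ, mul_one] at hIci
  simp only [hle, expMeasure_memoryless ht.le hB, hIci]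

theorem lintegral_expMeasure_threshold (hr : 0 < r) (c : ℝ≥0∞) {B : Set ℝ}
    (hB : MeasurableSet B) (a : ℝ≥0∞) :
    ∫⁻ x, (if c ≤ ENNReal.ofReal x then B.indicator (fun _ => a) (x - c.toReal)
      else expMeasure r B * a) ∂expMeasure r = expMeasure r B * a := by
  have := isProbabilityMeasure_expMeasure hr
  set G := {x : ℝ | c ≤ ENNReal.ofReal x}
  have hG : MeasurableSet G := measurableSet_le measurable_const ENNReal.measurable_ofReal
  have hS : MeasurableSet ((· - c.toReal) ⁻¹' B) := measurable_sub_const _ hB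
  have hGB : (· - c.toReal) ⁻¹' B ∩ G = {x | c ≤ ENNReal.ofReal x ∧ x - c.toReal ∈ B} := by
    ext x; exact and_comm
  have hin : ∫⁻ x in G, (if c ≤ ENNReal.ofReal x then B.indicator (fun _ => a) (x - c.toReal)
      else expMeasure r B * a) ∂expMeasure r = a * (expMeasure r G * expMeasure r B) := by
    rw [setLIntegral_congr_fun hG (g := ((· - c.toReal) ⁻¹' B).indicator fun _ => a)
      (fun x (hx : c ≤ _) => by simp [hx, indicator_apply]), lintegral_indicator_const hS,
      Measure.restrict_apply hS, hGB, expMeasure_memoryless_ennreal hr c hB]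
  have hout : ∫⁻ x in Gᶜ, (if c ≤ ENNReal.ofReal x then B.indicator (fun _ => a) (x - c.toReal)
      else expMeasure r B * a) ∂expMeasure r = expMeasure r B * a * expMeasure r Gᶜ := by
    rw [setLIntegral_congr_fun hG.compl (g := fun _ => expMeasure r B * a)
      (fun x (hx : ¬c ≤ _) => if_neg hx), setLIntegral_const]
  calc _ = a * (expMeasure r G * expMeasure r B) + expMeasure r B * a * expMeasure r Gᶜ := by
        rw [← lintegral_add_compl _ hG, hin, hout]
    _ = expMeasure r B * a * (expMeasure r G + expMeasure r Gᶜ) := by ring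
    _ = expMeasure r B * a := by rw [measure_add_measure_compl hG, measure_univ, mul_one]

lemma expMeasure_Ioi (hr : 0 < r) {t : ℝ} (ht : 0 ≤ t) :
    expMeasure r (Ioi t) = ENNReal.ofReal (exp (-(r * t))) := by
  have := isProbabilityMeasure_expMeasure hr
  have hle : exp (-(r * t)) ≤ 1 := exp_le_one_iff.mpr (neg_nonpos.mpr (mul_nonneg hr.le ht))
  rw [← compl_Iic, prob_compl_eq_one_sub measurableSet_Iic, ← ofReal_cdf, cdf_expMeasure_eq hr,
    if_pos ht, ← ENNReal.ofReal_one, ← ENNReal.ofReal_sub _ (sub_nonneg.mpr hle), sub_sub_cancel]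

end Exponential

theorem MeasureTheory.Measure.pi_apply_eq_lintegral_fin_cons {α : Type*} [MeasurableSpace α]
    (μ : Measure α) [SigmaFinite μ] {m : ℕ} {E : Set (Fin (m + 1) → α)}
    (hE : MeasurableSet E) :
    Measure.pi (fun _ => μ) E = ∫⁻ x, Measure.pi (fun _ => μ) {w | Fin.cons x w ∈ E} ∂μ := by
  have hmp := measurePreserving_piFinSuccAbove (fun _ : Fin (m + 1) => μ) 0
  rw [← hmp.symm.measure_preimage hE.nullMeasurableSet,
    Measure.prod_apply (MeasurableEquiv.measurable _ hE)]
  refine lintegral_congr fun x => congrArg _ (Set.ext fun w => ?_)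
  simp [MeasurableEquiv.piFinSuccAbove_symm_apply]
  rfl

theorem List.getElem?_length_filter_lt {α : Type*} [LinearOrder α] {L : List α}
    (hL : L.Pairwise (· < ·)) {a : α} (ha : a ∈ L) :
    L[(L.filter (· < a)).length]? = some a := by
  induction L with
  | nil => simp at ha
  | cons x L ih =>
    rw [List.pairwise_cons] at hL
    rcases List.mem_cons.mp ha with rfl | ha
    · have : L.filter (· < a) = [] :=
        List.filter_eq_nil_iff.mpr fun y hy => by simpa using (hL.1 y hy).le
      simp [this]
    · simp [hL.1 a ha, ih hL.2 ha]

theorem List.getD_map_filter_finRange {m : ℕ} {β : Type*} (P : Fin m → Prop) [DecidablePred P]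
    (g : Fin m → β) (d : β) {a : Fin m} (ha : P a) :
    (((List.finRange m).filter P).map g).getD (Finset.univ.filter fun j => P j ∧ j < a).card d =
      g a := by
  set L := (List.finRange m).filter P
  have hcard : (Finset.univ.filter fun j => P j ∧ j < a).card = (L.filter (· < a)).length := by
    rw [List.filter_filter]
    exact (congrArg List.length (List.filter_congr fun j _ => by simp [Bool.and_comm])).trans rfl
  have hL : L.Pairwise (· < ·) := (List.pairwise_lt_finRange m).filter _
  have haL : a ∈ L := by simpa [L] using ha
  rw [List.getD_eq_getElem?_getD, List.getElem?_map, hcard,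
    List.getElem?_length_filter_lt hL haL]
  rfl

lemma ENNReal.add_ofReal_lt_ofReal_iff {c : ℝ≥0∞} (hc : c ≠ ⊤) {p x : ℝ} (hp : 0 ≤ p) :
    c + ENNReal.ofReal p < ENNReal.ofReal x ↔ p < x - c.toReal := by
  rw [← ENNReal.ofReal_toReal hc, ← ENNReal.ofReal_add ENNReal.toReal_nonneg hp,
    ENNReal.ofReal_lt_ofReal_iff', ENNReal.toReal_ofReal ENNReal.toReal_nonneg]
  constructor
  · exact fun h => by linarith [h.1]
  · exact fun h => ⟨by linarith, by linarith [ENNReal.toReal_nonneg (a := c)]⟩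

lemma ProbabilityTheory.iIndepFun.iIndepSet_preimage {ι Ω β : Type*} [MeasurableSpace Ω]
    [MeasurableSpace β] {μ : Measure Ω} {Y : ι → Ω → β} (h : iIndepFun Y μ) {S : ι → Set β}
    (hS : ∀ i, MeasurableSet (S i)) : iIndepSet (fun i => Y i ⁻¹' S i) μ := by
  rw [iIndepSet_iff_iIndep]
  refine iIndep_of_iIndep_of_le ((iIndepFun_iff_iIndep _ _ _).mp h) fun i => ?_
  exact MeasurableSpace.generateFrom_le fun s hs => by
    rw [mem_singleton_iff.mp hs]; exact ⟨S i, hS i, rfl⟩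

lemma ProbabilityTheory.iIndepFun_of_measurePreserving_pi {ι Ω : Type*} [Fintype ι]
    {β : ι → Type*} [∀ i, MeasurableSpace (β i)] [MeasurableSpace Ω] {μ : Measure Ω}
    [IsProbabilityMeasure μ] {ν : ∀ i, Measure (β i)} [∀ i, IsProbabilityMeasure (ν i)]
    {Y : ∀ i, Ω → β i} (h : MeasurePreserving (fun ω i => Y i ω) μ (Measure.pi ν)) :
    iIndepFun Y μ := by
  have hY (i : ι) : MeasurePreserving (Y i) μ (ν i) := (measurePreserving_eval ν i).comp h
  rw [iIndepFun_iff_map_fun_eq_pi_map fun i => (hY i).measurable.aemeasurable, h.map_eq]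
  simp only [(hY _).map_eq]

abbrev ThresholdRule (m : ℕ) : Type := (j : Fin m) → (Fin j → ℝ) → ℝ≥0∞

namespace ThresholdRule

noncomputable section

variable {m : ℕ}

def threshold (f : ThresholdRule m) (v : Fin m → ℝ) (j : Fin m) : ℝ≥0∞ :=
  f j (Fin.take j j.isLt.le v)

/-- The paper's `Y_1, …, Y_N`. -/
def goodResiduals (f : ThresholdRule m) (v : Fin m → ℝ) : List ℝ :=
  ((List.finRange m).filter fun j => threshold f v j ≤ ENNReal.ofReal (v j)).map
    fun j => v j - (threshold f v j).toReal

/-- Padded with `0` if there are fewer than `k` good indices. -/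
def firstGoodResiduals (f : ThresholdRule m) (k : ℕ) (v : Fin m → ℝ) : Fin k → ℝ :=
  fun i => (goodResiduals f v).getD i 0

def shift (f : ThresholdRule (m + 1)) (x : ℝ) : ThresholdRule m :=
  fun j u => f j.succ (Fin.cons x u)

lemma threshold_zero (f : ThresholdRule (m + 1)) (v : Fin (m + 1) → ℝ) :
    threshold f v 0 = f 0 fun _ => 0 :=
  congrArg (f 0) (funext fun q => q.elim0)

lemma threshold_cons_succ (f : ThresholdRule (m + 1)) (x : ℝ) (w : Fin m → ℝ) (j : Fin m) :
    threshold f (Fin.cons x w) j.succ = threshold (f.shift x) w j := by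
  refine congrArg (f j.succ) (funext fun q => ?_)
  cases q using Fin.cases <;> rfl

lemma goodResiduals_cons (f : ThresholdRule (m + 1)) (x : ℝ) (w : Fin m → ℝ) :
    goodResiduals f (Fin.cons x w) =
      if f 0 (fun _ => 0) ≤ ENNReal.ofReal x then
        (x - (f 0 fun _ => 0).toReal) :: goodResiduals (f.shift x) w
      else goodResiduals (f.shift x) w := by
  simp only [goodResiduals, List.finRange_succ, List.filter_cons, List.filter_map,
    Function.comp_def, threshold_cons_succ, Fin.cons_zero, decide_eq_true_eq]
  rw [threshold_zero]
  split_ifs <;> simp only [List.map_cons, List.map_map, Function.comp_def, Fin.cons_zero,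
    Fin.cons_succ, threshold_cons_succ, threshold_zero]

lemma firstGoodResiduals_cons (f : ThresholdRule (m + 1)) (k : ℕ) (x : ℝ) (w : Fin m → ℝ) :
    firstGoodResiduals f (k + 1) (Fin.cons x w) =
      if f 0 (fun _ => 0) ≤ ENNReal.ofReal x then
        Fin.cons (x - (f 0 fun _ => 0).toReal) (firstGoodResiduals (f.shift x) k w)
      else firstGoodResiduals (f.shift x) (k + 1) w := by
  ext i
  simp only [firstGoodResiduals, goodResiduals_cons]
  split_ifs
  · cases i using Fin.cases <;> rfl
  · rfl

lemma shift_eq_zero {k : ℕ} {f : ThresholdRule (m + 1)}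
    (hf : ∀ j : Fin (m + 1), m + 1 ≤ j + k → f j = 0) (x : ℝ) (j : Fin m) (hj : m ≤ j + k) :
    f.shift x j = 0 :=
  funext fun u => congrFun (hf j.succ (by simp; omega)) _

lemma measurable_threshold {f : ThresholdRule m} (hf : ∀ j, Measurable (f j)) (j : Fin m) :
    Measurable fun v => threshold f v j :=
  (hf j).comp (measurable_pi_lambda _ fun _ => measurable_pi_apply _)

lemma measurable_shift {f : ThresholdRule (m + 1)} (hf : ∀ j, Measurable (f j)) (x : ℝ)
    (j : Fin m) : Measurable (f.shift x j) :=
  (hf j.succ).comp <| measurable_pi_lambda _ fun q => by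
    cases q using Fin.cases
    · exact measurable_const
    · exact measurable_pi_apply _

lemma measurable_firstGoodResiduals {f : ThresholdRule m} (hf : ∀ j, Measurable (f j))
    (k : ℕ) : Measurable (firstGoodResiduals f k) := by
  refine measurable_pi_lambda _ fun i => ?_
  -- For a fixed pattern of good indices the residual is explicit, and there are finitely
  -- many patterns.
  let pattern : (Fin m → ℝ) → Fin m → Bool := fun v j =>
    decide (threshold f v j ≤ ENNReal.ofReal (v j))
  let G : (Fin m → ℝ) × (Fin m → Bool) → ℝ := fun p =>
    (((List.finRange m).filter p.2).map fun j => p.1 j - (threshold f p.1 j).toReal).getD i 0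
  have hpattern : Measurable pattern := measurable_pi_lambda _ fun j => measurable_to_bool <| by
    simpa [pattern, preimage] using measurableSet_le (measurable_threshold hf j)
      (ENNReal.measurable_ofReal.comp (measurable_pi_apply j))
  have hG : Measurable G := measurable_from_prod_countable_left fun b => by
    simp only [G, List.getD_eq_getElem?_getD, List.getElem?_map]
    cases ((List.finRange m).filter b)[i]? with
    | none => exact measurable_const
    | some j => exact (measurable_pi_apply j).sub (measurable_threshold hf j).ennreal_toReal
  exact hG.comp (measurable_id.prodMk hpattern)

variable {r : ℝ}

theorem pi_expMeasure_firstGoodResiduals_preimage_pi (hr : 0 < r) {k : ℕ} (hk : k ≤ m)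
    (f : ThresholdRule m) (hf : ∀ j, Measurable (f j)) (hf0 : ∀ j : Fin m, m ≤ j + k → f j = 0)
    {B : Fin k → Set ℝ} (hB : ∀ i, MeasurableSet (B i)) :
    Measure.pi (fun _ : Fin m => expMeasure r) (firstGoodResiduals f k ⁻¹' univ.pi B) =
      ∏ i, expMeasure r (B i) := by
  have := isProbabilityMeasure_expMeasure hr
  induction m generalizing k with
  | zero =>
    obtain rfl : k = 0 := by omega
    simp [show univ.pi B = univ by ext; simp]
  | succ m ih =>
  cases k with
  | zero => simp [show univ.pi B = univ by ext; simp]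
  | succ k =>
  set c := f 0 fun _ => 0 with hc
  set Q := ∏ i : Fin k, expMeasure r (B i.succ) with hQ
  -- Condition on the first coordinate `x`: if it is good, its residual comes first and the
  -- others are those of the shifted rule; otherwise all residuals come from the shifted rule.
  have hslice : ∀ x, Measure.pi (fun _ : Fin m => expMeasure r)
      {w | Fin.cons x w ∈ firstGoodResiduals f (k + 1) ⁻¹' univ.pi B} =
      if c ≤ ENNReal.ofReal x then (B 0).indicator (fun _ => Q) (x - c.toReal)
      else expMeasure r (B 0) * Q := by
    intro x
    simp only [mem_preimage, firstGoodResiduals_cons, ← hc]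
    have hf' := measurable_shift hf x
    split_ifs with hx
    · by_cases hxB : x - c.toReal ∈ B 0
      · rw [indicator_of_mem hxB, hQ, ← ih (k := k) (by omega) _ hf'
          (fun j hj => shift_eq_zero hf0 x j (by omega)) (B := fun i => B i.succ)
          fun i => hB i.succ]
        congr 1 with w
        simp [Fin.forall_fin_succ, hxB]
      · rw [indicator_of_notMem hxB,
          ← measure_empty (μ := Measure.pi fun _ : Fin m => expMeasure r)]
        congr 1 with w
        simp [Fin.forall_fin_succ, hxB]
    · have hm : k + 1 ≤ m := by
        by_contra hm
        exact hx (by rw [hc, hf0 0 (by simp; omega)]; exact zero_le)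
      rw [hQ, ← Fin.prod_univ_succ (f := fun i => expMeasure r (B i))]
      exact ih hm _ hf' (shift_eq_zero hf0 x) hB
  rw [Measure.pi_apply_eq_lintegral_fin_cons _
      (measurable_firstGoodResiduals hf _ (.univ_pi hB)),
    lintegral_congr hslice, lintegral_expMeasure_threshold hr c (hB 0), Fin.prod_univ_succ]

theorem measurePreserving_firstGoodResiduals (hr : 0 < r) {k : ℕ} (hk : k ≤ m)
    (f : ThresholdRule m) (hf : ∀ j, Measurable (f j)) (hf0 : ∀ j : Fin m, m ≤ j + k → f j = 0) :
    MeasurePreserving (firstGoodResiduals f k) (Measure.pi fun _ => expMeasure r)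
      (Measure.pi fun _ => expMeasure r) := by
  have := isProbabilityMeasure_expMeasure hr
  refine ⟨measurable_firstGoodResiduals hf k, (Measure.pi_eq fun B hB => ?_).symm⟩
  rw [Measure.map_apply (measurable_firstGoodResiduals hf k) (.univ_pi hB)]
  exact pi_expMeasure_firstGoodResiduals_preimage_pi hr hk f hf hf0 hB

end

end ThresholdRule

theorem consecutive_good_indices_exponential_general
    {Ω : Type*} [MeasurableSpace Ω] (μ : Measure Ω) [IsProbabilityMeasure μ]
    (n : ℕ)
    (X : Fin (2 * n) → Ω → ℝ)
    (hmeas : ∀ i, Measurable (X i))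
    (hindep : iIndepFun X μ)
    (hdist : ∀ i, μ.map (X i) = expMeasure 1)
    (f : (i : Fin (2 * n)) → (Fin i.val → ℝ) → ℝ≥0∞)
    (hfmeas : ∀ i, Measurable (f i))
    (hf0 : ∀ i : Fin (2 * n), n ≤ i.val → f i = 0)
    (p : ℝ) (hp : 0 ≤ p)
    -- `I i` is the `(i+1)`-st good index: it is good, and there are exactly `i` good
    -- indices strictly smaller than it.
    (I : Fin n → Ω → Fin (2 * n))
    (hIgood : ∀ ω (i : Fin n), goodIdx X f ω (I i ω))
    (hIrank : ∀ ω (i : Fin n),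
      (Finset.univ.filter fun j => goodIdx X f ω j ∧ j < I i ω).card = i.val)
    -- `Y i = X (I i) - f (I i) (X_1, …, X_{I i - 1})`.
    (Y : Fin n → Ω → ℝ)
    (hY : ∀ (i : Fin n) ω, Y i ω =
      X (I i ω) ω -
        (f (I i ω) (fun j => X ⟨j.val, j.isLt.trans (I i ω).isLt⟩ ω)).toReal) :
    (iIndepFun Y μ ∧ ∀ i, μ.map (Y i) = expMeasure 1) ∧
      (iIndepSet (fun i : Fin n => {ω | excellentIdx X f p ω (I i ω)}) μ ∧
        ∀ i : Fin n, μ {ω | excellentIdx X f p ω (I i ω)} =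
          ENNReal.ofReal (Real.exp (-p))) := by
  have := isProbabilityMeasure_expMeasure one_pos
  set V : Ω → Fin (2 * n) → ℝ := fun ω j => X j ω
  have hV : MeasurePreserving V μ (Measure.pi fun _ => expMeasure 1) :=
    ⟨measurable_pi_lambda _ hmeas, by
      rw [(iIndepFun_iff_map_fun_eq_pi_map fun i => (hmeas i).aemeasurable).mp hindep]
      simp only [hdist]⟩
  have hYV : (fun ω i => Y i ω) = ThresholdRule.firstGoodResiduals f n ∘ V := by
    funext ω i
    -- `I i ω` is the good index of rank `i`, so its residual is the `i`-th good residual.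
    rw [hY]
    show _ = (ThresholdRule.goodResiduals f (V ω)).getD i 0
    rw [← hIrank ω i, ThresholdRule.goodResiduals]
    convert (List.getD_map_filter_finRange (goodIdx X f ω)
      (fun j => V ω j - (ThresholdRule.threshold f (V ω) j).toReal) 0 (hIgood ω i)).symm <;> rfl
  have hlaw : MeasurePreserving (fun ω i => Y i ω) μ (Measure.pi fun _ => expMeasure 1) :=
    hYV ▸ (ThresholdRule.measurePreserving_firstGoodResiduals one_pos (by omega) f hfmeas
      fun j hj => hf0 j (by omega)).comp hV
  have hexc (i : Fin n) : {ω | excellentIdx X f p ω (I i ω)} = Y i ⁻¹' Ioi p := by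
    ext ω
    exact (ENNReal.add_ofReal_lt_ofReal_iff (ne_top_of_le_ne_top ENNReal.ofReal_ne_top
      (hIgood ω i)) hp).trans (by rw [mem_preimage, mem_Ioi, hY])
  have hindepY := iIndepFun_of_measurePreserving_pi hlaw
  have hmarg (i : Fin n) : MeasurePreserving (Y i) μ (expMeasure 1) :=
    (measurePreserving_eval _ i).comp hlaw
  refine ⟨⟨hindepY, fun i => (hmarg i).map_eq⟩, ?_, fun i => ?_⟩
  · simp only [hexc]
    exact hindepY.iIndepSet_preimage fun _ => measurableSet_Ioi
  · rw [hexc, (hmarg i).measure_preimage measurableSet_Ioi.nullMeasurableSet,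
      expMeasure_Ioi one_pos hp, one_mul]

/-- Let `X 1, …, X (2n)` be independent `Exp(1)` random variables, let
`f i : ℝ^{i-1} → ℝ≥0 ∪ {+∞}` be measurable functions with `f i ≡ 0` for the last `n`
indices, and let `p ≥ 0`. For `i < n`, let `I i` be the `(i+1)`-st good index (it exists,
since the last `n` indices are always good), and let `Y i = X (I i) - f (I i) (X_1, …)`.
Then `Y 0, …, Y (n-1)` are independent `Exp(1)` random variables; consequently the events
`A i = "I i is excellent"` are independent and each has probability `exp (-p)`. -/
theorem consecutive_good_indices_exponential
    {Ω : Type*} [MeasurableSpace Ω] (μ : Measure Ω) [IsProbabilityMeasure μ]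
    (n : ℕ) (hn : 1 ≤ n)
    (X : Fin (2 * n) → Ω → ℝ)
    (hmeas : ∀ i, Measurable (X i))
    (hindep : iIndepFun X μ)
    (hdist : ∀ i, μ.map (X i) = expMeasure 1)
    (f : (i : Fin (2 * n)) → (Fin i.val → ℝ) → ℝ≥0∞)
    (hfmeas : ∀ i, Measurable (f i))
    (hf0 : ∀ i : Fin (2 * n), n ≤ i.val → f i = 0)
    (p : ℝ) (hp : 0 ≤ p)
    -- `I i` is the `(i+1)`-st good index: it is good, and there are exactly `i` good
    -- indices strictly smaller than it.
    (I : Fin n → Ω → Fin (2 * n))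
    (hIgood : ∀ ω (i : Fin n), goodIdx X f ω (I i ω))
    (hIrank : ∀ ω (i : Fin n),
      (Finset.univ.filter fun j => goodIdx X f ω j ∧ j < I i ω).card = i.val)
    -- `Y i = X (I i) - f (I i) (X_1, …, X_{I i - 1})`.
    (Y : Fin n → Ω → ℝ)
    (hY : ∀ (i : Fin n) ω, Y i ω =
      X (I i ω) ω -
        (f (I i ω) (fun j => X ⟨j.val, j.isLt.trans (I i ω).isLt⟩ ω)).toReal) :
    (iIndepFun Y μ ∧ ∀ i, μ.map (Y i) = expMeasure 1) ∧
      (iIndepSet (fun i : Fin n => {ω | excellentIdx X f p ω (I i ω)}) μ ∧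
        ∀ i : Fin n, μ {ω | excellentIdx X f p ω (I i ω)} =
          ENNReal.ofReal (Real.exp (-p))) :=
  consecutive_good_indices_exponential_general μ n X hmeas hindep hdist f hfmeas hf0 p hp I hIgood
    hIrank Y hY
end

section
/- For every apex graph K there exists an apex graph K′ such that the following holds: if G is a K-minor-free graph and G′ is created from G by adding, for every nonempty clique A in G, a new vertex v_A whose neighborhood in G′ is exactly A, then G′ is K′-minor-free. -/
open SimpleGraph
open scoped ENNReal Classical

universe u

/-- `K` is a minor of `G`: there is a minor model assigning to every vertex of `K`
a nonempty connected branch set in `G`, the branch sets being pairwise disjoint,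
with every edge of `K` realized by an edge of `G` between the two branch sets. -/
def SimpleGraph.IsMinorOf {W : Type*} {V : Type*} (K : SimpleGraph W) (G : SimpleGraph V) : Prop :=
  ∃ φ : W → Set V,
    (∀ w, (φ w).Nonempty) ∧
    (∀ w, ((G.induce (φ w)).Connected)) ∧
    (Pairwise fun w w' => Disjoint (φ w) (φ w')) ∧
    ∀ w w', K.Adj w w' → ∃ u ∈ φ w, ∃ v ∈ φ w', G.Adj u v

/-- A graph is planar iff it has neither `K₅` nor `K₃,₃` as a minor
(Wagner's characterization of planarity). -/
def SimpleGraph.IsPlanar {V : Type*} (G : SimpleGraph V) : Prop :=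
  ¬ (completeGraph (Fin 5)).IsMinorOf G ∧
    ¬ (completeBipartiteGraph (Fin 3) (Fin 3)).IsMinorOf G

/-- An apex graph: a graph having a vertex whose removal leaves a planar graph. -/
def SimpleGraph.IsApex {W : Type*} (K : SimpleGraph W) : Prop :=
  ∃ u : W, (K.induce {v : W | v ≠ u}).IsPlanar

/-- `(T, bag)` is a tree decomposition of `G`: `T` is a tree, every vertex of `G` is in
some bag, both endpoints of every edge of `G` appear together in some bag, and for every
vertex of `G` the set of nodes whose bags contain it induces a connected subtree. -/
structure SimpleGraph.IsTreeDecomp {V : Type u} {ι : Type u} (G : SimpleGraph V)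
    (T : SimpleGraph ι) (bag : ι → Set V) : Prop where
  isTree : T.IsTree
  covers : ∀ v : V, ∃ i, v ∈ bag i
  covers_edge : ∀ u v : V, G.Adj u v → ∃ i, u ∈ bag i ∧ v ∈ bag i
  bag_connected : ∀ v : V, (T.induce {i | v ∈ bag i}).Connected

/-- The treewidth of `G` is at most `w`: there is a tree decomposition of `G` all of whose
bags have size at most `w + 1`. -/
def SimpleGraph.TreewidthLE {V : Type u} (G : SimpleGraph V) (w : ℝ) : Prop :=
  ∃ (ι : Type u) (T : SimpleGraph ι) (bag : ι → Set V),
    G.IsTreeDecomp T bag ∧ ∀ i, (bag i).Finite ∧ ((bag i).ncard : ℝ) ≤ w + 1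

/-- The graph obtained from `G` by adding, for every nonempty clique `A` of `G`, a new
vertex `v_A` whose neighborhood is exactly `A`. -/
def cliqueExtensionGraph {V : Type u} (G : SimpleGraph V) :
    SimpleGraph (V ⊕ {A : Set V // A.Nonempty ∧ G.IsClique A}) where
  Adj x y :=
    match x, y with
    | .inl u, .inl v => G.Adj u v
    | .inl u, .inr A => u ∈ A.1
    | .inr A, .inl v => v ∈ A.1
    | .inr _, .inr _ => False
  symm := ⟨by
    rintro (u | A) (v | B) h
    · exact h.symm
    · exact h
    · exact h
    · exact h.elim⟩
  loopless := ⟨by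
    rintro (u | A) h
    · exact G.irrefl h
    · exact h.elim⟩

/-!
Take for `K'` the graph `K` with a pendant vertex attached to every vertex. In `G'` the new
vertices `v_A` are pairwise non-adjacent and simplicial, so they can be deleted from the branch
sets of a minor model as long as every branch set keeps a vertex of `G`: connectivity survives and
each edge between branch sets through some `v_A` is rerouted inside the clique `A`. Given a
`K'`-model in `G'`, merge the branch set of each vertex with that of its pendant; the merged set
contains an edge, hence a vertex of `G`, and deleting the `v_A` leaves a `K`-model in `G`.
The same deletion shows that `K'` is apex with the apex of `K`: pendant vertices are simplicial,
and none can form a branch set of `K₅` or `K₃,₃` by itself, as those have minimum degree two.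
-/

namespace SimpleGraph

section MinorModel

variable {V V' W W' : Type*} {X : SimpleGraph V} {X' : SimpleGraph V'}
  {H : SimpleGraph W} {H' : SimpleGraph W'}

structure IsMinorModel (H : SimpleGraph W) (X : SimpleGraph V) (φ : W → Set V) : Prop where
  nonempty : ∀ w, (φ w).Nonempty
  connected : ∀ w, (X.induce (φ w)).Connected
  pairwise_disjoint : Pairwise fun w w' => Disjoint (φ w) (φ w')
  exists_adj : ∀ w w', H.Adj w w' → ∃ u ∈ φ w, ∃ v ∈ φ w', X.Adj u v

theorem isMinorOf_iff_exists_isMinorModel : H.IsMinorOf X ↔ ∃ φ, H.IsMinorModel X φ :=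
  ⟨fun ⟨φ, h₁, h₂, h₃, h₄⟩ => ⟨φ, h₁, h₂, h₃, h₄⟩,
    fun ⟨φ, h₁, h₂, h₃, h₄⟩ => ⟨φ, h₁, h₂, h₃, h₄⟩⟩

theorem IsMinorModel.isMinorOf {φ : W → Set V} (h : H.IsMinorModel X φ) : H.IsMinorOf X :=
  isMinorOf_iff_exists_isMinorModel.2 ⟨φ, h⟩

theorem IsMinorModel.comp {φ : W → Set V} (h : H.IsMinorModel X φ) (f : H' →g H)
    (hf : Function.Injective f) : H'.IsMinorModel X (φ ∘ f) where
  nonempty w := h.nonempty (f w)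
  connected w := h.connected (f w)
  pairwise_disjoint _ _ hww' := h.pairwise_disjoint (hf.ne hww')
  exists_adj _ _ hww' := h.exists_adj _ _ (f.map_adj hww')

theorem IsMinorOf.of_injective_hom (h : H.IsMinorOf X) (f : H' →g H)
    (hf : Function.Injective f) : H'.IsMinorOf X := by
  obtain ⟨φ, hφ⟩ := isMinorOf_iff_exists_isMinorModel.1 h
  exact (hφ.comp f hf).isMinorOf

theorem IsMinorModel.image {φ : W → Set V} (h : H.IsMinorModel X φ) (f : X ↪g X') :
    H.IsMinorModel X' fun w => f '' φ w where
  nonempty w := (h.nonempty w).image f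
  connected w := (h.connected w).map (induceHom f.toHom (Set.mapsTo_image f _)) <| by
    rintro ⟨_, v, hv, rfl⟩
    exact ⟨⟨v, hv⟩, rfl⟩
  pairwise_disjoint _ _ hww' := (Set.disjoint_image_iff f.injective).2 (h.pairwise_disjoint hww')
  exists_adj w w' hww' := by
    obtain ⟨u, hu, v, hv, huv⟩ := h.exists_adj w w' hww'
    exact ⟨f u, Set.mem_image_of_mem f hu, f v, Set.mem_image_of_mem f hv, f.map_adj_iff.2 huv⟩

theorem IsMinorOf.map (h : H.IsMinorOf X) (f : X ↪g X') : H.IsMinorOf X' := by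
  obtain ⟨φ, hφ⟩ := isMinorOf_iff_exists_isMinorModel.1 h
  exact (hφ.image f).isMinorOf

theorem Connected.induce_preimage {s : Set V'} (f : X ↪g X') (hs : s ⊆ Set.range f)
    (h : (X'.induce s).Connected) : (X.induce (f ⁻¹' s)).Connected := by
  let e : X.induce (f ⁻¹' s) ↪g X'.induce s :=
    { toFun := fun v => ⟨f v, v.2⟩
      inj' := fun _ _ hvw => Subtype.ext (f.injective (congrArg Subtype.val hvw))
      map_rel_iff' := f.map_adj_iff }
  have he : Function.Surjective e := by
    rintro ⟨_, hv⟩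
    obtain ⟨v, rfl⟩ := hs hv
    exact ⟨⟨v, hv⟩, rfl⟩
  exact (Iso.connected_iff (RelIso.ofSurjective e he)).2 h

theorem IsMinorModel.preimage {φ : W → Set V'} (h : H.IsMinorModel X' φ) (f : X ↪g X')
    (hφ : ∀ w, φ w ⊆ Set.range f) : H.IsMinorModel X fun w => f ⁻¹' φ w where
  nonempty w := by
    obtain ⟨_, hv⟩ := h.nonempty w
    obtain ⟨v, rfl⟩ := hφ w hv
    exact ⟨v, hv⟩
  connected w := (h.connected w).induce_preimage f (hφ w)
  pairwise_disjoint _ _ hww' := (h.pairwise_disjoint hww').preimage f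
  exists_adj w w' hww' := by
    obtain ⟨_, hu, _, hv, huv⟩ := h.exists_adj w w' hww'
    obtain ⟨u, rfl⟩ := hφ w hu
    obtain ⟨v, rfl⟩ := hφ w' hv
    exact ⟨u, hu, v, hv, f.map_adj_iff.1 huv⟩

theorem IsPlanar.of_embedding (h : X'.IsPlanar) (f : X ↪g X') : X.IsPlanar :=
  ⟨fun hK => h.1 (hK.map f), fun hK => h.2 (hK.map f)⟩

theorem IsApex.of_iso (h : H.IsApex) (e : H ≃g H') : H'.IsApex := by
  obtain ⟨u, hu⟩ := h
  refine ⟨e u, hu.of_embedding (Iso.induce e.symm ?_).toEmbedding⟩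
  refine ⟨fun v hv => ?_, e.symm.injective.injOn, fun v hv => ⟨e v, ?_, e.symm_apply_apply v⟩⟩
  · simpa [e.symm_apply_eq] using hv
  · simpa using hv

end MinorModel

section Simplicial

variable {V V' W : Type*} {X : SimpleGraph V} {H : SimpleGraph W}

theorem Connected.of_surjective_of_adj_reachable {X' : SimpleGraph V'} (h : X.Connected)
    (f : V → V') (hf : Function.Surjective f)
    (hadj : ∀ ⦃a b⦄, X.Adj a b → X'.Reachable (f a) (f b)) : X'.Connected := by
  have := h.nonempty.map f
  refine ⟨hf.forall₂.2 fun a b => ?_⟩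
  obtain ⟨p⟩ := h.preconnected a b
  induction p with
  | nil => rfl
  | cons hab _ ih => exact (hadj hab).trans ih

theorem Connected.subsingleton_of_isIndepSet {s : Set V} (h : (X.induce s).Connected)
    (hs : X.IsIndepSet s) : s.Subsingleton := by
  intro a ha b hb
  by_contra hab
  obtain ⟨p⟩ := h.preconnected ⟨a, ha⟩ ⟨b, hb⟩
  have hadj : X.Adj a p.snd := p.adj_snd (p.not_nil_of_ne fun h => hab (Subtype.mk.inj h))
  exact hs ha p.snd.2 hadj.ne hadj

variable {P s : Set V}

theorem Connected.exists_adj_mem_diff (h : (X.induce s).Connected) (hP : X.IsIndepSet P)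
    (hsP : (s \ P).Nonempty) {p : V} (hps : p ∈ s) (hpP : p ∈ P) :
    ∃ c ∈ s \ P, X.Adj p c := by
  obtain ⟨t, hts, htP⟩ := hsP
  obtain ⟨w⟩ := h.preconnected ⟨p, hps⟩ ⟨t, hts⟩
  have hadj : X.Adj p w.snd := w.adj_snd (w.not_nil_of_ne fun h => htP (Subtype.mk.inj h ▸ hpP))
  exact ⟨w.snd, ⟨w.snd.2, fun hc => hP hpP hc hadj.ne hadj⟩, hadj⟩

/-- Each deleted vertex is sent to a remaining neighbour; adjacent vertices then go to equal or
adjacent ones, since the neighbourhood of a deleted vertex is a clique. -/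
theorem Connected.induce_diff (h : (X.induce s).Connected)
    (hP : ∀ p ∈ P, X.IsClique (X.neighborSet p)) (hPind : X.IsIndepSet P)
    (hsP : (s \ P).Nonempty) : (X.induce (s \ P)).Connected := by
  have hr : ∀ v : s, ∃ c : ↥(s \ P), c.1 = v.1 ∨ v.1 ∈ P ∧ X.Adj v c := by
    rintro ⟨v, hv⟩
    by_cases hvP : v ∈ P
    · obtain ⟨c, hc, hvc⟩ := h.exists_adj_mem_diff hPind hsP hv hvP
      exact ⟨⟨c, hc⟩, .inr ⟨hvP, hvc⟩⟩
    · exact ⟨⟨v, hv, hvP⟩, .inl rfl⟩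
  choose r hr using hr
  have hr_of_notMem : ∀ v : s, (hvP : v.1 ∉ P) → r v = ⟨v, v.2, hvP⟩ := fun v hvP =>
    Subtype.ext <| (hr v).resolve_right fun h => hvP h.1
  have hreach : ∀ (a : s) (b : ↥(s \ P)), X.Adj a b → (X.induce (s \ P)).Reachable (r a) b := by
    intro a b hab
    rcases hr a with hra | ⟨haP, hac⟩
    · exact Adj.reachable (show X.Adj (r a) b from hra ▸ hab)
    · by_cases hrb : r a = b
      · rw [hrb]
      · exact Adj.reachable (show X.Adj (r a) b from
          hP a haP hac hab fun h => hrb (Subtype.ext h))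
  refine h.of_surjective_of_adj_reachable r (fun c => ⟨⟨c, c.2.1⟩, hr_of_notMem _ c.2.2⟩) ?_
  intro a b hab
  by_cases hbP : b.1 ∈ P
  · have haP : a.1 ∉ P := fun haP => hPind haP hbP (fun h => hab.ne (Subtype.ext h)) hab
    rw [hr_of_notMem a haP]
    exact (hreach b ⟨a, a.2, haP⟩ hab.symm).symm
  · rw [hr_of_notMem b hbP]
    exact hreach a ⟨b, b.2, hbP⟩ hab

variable {φ : W → Set V}

theorem IsMinorModel.diff (h : H.IsMinorModel X φ) (hP : ∀ p ∈ P, X.IsClique (X.neighborSet p))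
    (hPind : X.IsIndepSet P) (hφ : ∀ w, (φ w \ P).Nonempty) :
    H.IsMinorModel X fun w => φ w \ P where
  nonempty := hφ
  connected w := (h.connected w).induce_diff hP hPind (hφ w)
  pairwise_disjoint _ _ hww' := (h.pairwise_disjoint hww').mono Set.sdiff_subset Set.sdiff_subset
  exists_adj w w' hww' := by
    have reroute : ∀ a b u v, a ≠ b → u ∈ φ a → v ∈ φ b → X.Adj u v → v ∉ P →
        ∃ c ∈ φ a \ P, X.Adj c v := by
      intro a b u v hab hu hv huv hvP
      by_cases huP : u ∈ P
      · obtain ⟨c, hc, huc⟩ := (h.connected a).exists_adj_mem_diff hPind (hφ a) hu huP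
        have hcv : c ≠ v := fun hcv => (h.pairwise_disjoint hab).ne_of_mem hc.1 hv hcv
        exact ⟨c, hc, hP u huP huc huv hcv⟩
      · exact ⟨u, ⟨hu, huP⟩, huv⟩
    obtain ⟨u, hu, v, hv, huv⟩ := h.exists_adj w w' hww'
    by_cases hvP : v ∈ P
    · have huP : u ∉ P := fun huP => hPind huP hvP huv.ne huv
      obtain ⟨c, hc, hcu⟩ := reroute w' w v u hww'.ne.symm hv hu huv.symm huP
      exact ⟨u, ⟨hu, huP⟩, c, hc, hcu.symm⟩
    · obtain ⟨c, hc, hcv⟩ := reroute w w' u v hww'.ne hu hv huv hvP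
      exact ⟨c, hc, v, ⟨hv, hvP⟩, hcv⟩

theorem IsMinorModel.isMinorOf_of_simplicial {V'' : Type*} {Y : SimpleGraph V''}
    (h : H.IsMinorModel X φ) (hP : ∀ p ∈ P, X.IsClique (X.neighborSet p))
    (hPind : X.IsIndepSet P) (hφ : ∀ w, (φ w \ P).Nonempty) (f : Y ↪g X)
    (hf : Pᶜ ⊆ Set.range f) : H.IsMinorOf Y :=
  ((h.diff hP hPind hφ).preimage f fun _ => (Set.sdiff_subset_compl _ _).trans hf).isMinorOf

theorem IsMinorModel.diff_nonempty_of_subsingleton (h : H.IsMinorModel X φ)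
    (hP : ∀ p ∈ P, (X.neighborSet p).Subsingleton) (hPind : X.IsIndepSet P)
    (hH : ∀ w, (H.neighborSet w).Nontrivial) (w : W) : (φ w \ P).Nonempty := by
  rw [Set.sdiff_nonempty]
  intro hwP
  have hsub := (h.connected w).subsingleton_of_isIndepSet (hPind.mono hwP)
  obtain ⟨w₁, hw₁, w₂, hw₂, hne⟩ := hH w
  obtain ⟨u₁, hu₁, v₁, hv₁, huv₁⟩ := h.exists_adj w w₁ hw₁
  obtain ⟨u₂, hu₂, v₂, hv₂, huv₂⟩ := h.exists_adj w w₂ hw₂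
  obtain rfl := hsub hu₁ hu₂
  exact (h.pairwise_disjoint hne).ne_of_mem hv₁ hv₂ (hP u₁ (hwP hu₁) huv₁ huv₂)

end Simplicial

section Pendants

variable {V W : Type*} {X : SimpleGraph V} {H : SimpleGraph W}

def withPendants (H : SimpleGraph W) : SimpleGraph (W ⊕ W) where
  Adj x y :=
    match x, y with
    | .inl a, .inl b => H.Adj a b
    | .inl a, .inr b => a = b
    | .inr a, .inl b => b = a
    | .inr _, .inr _ => False
  symm := ⟨by
    rintro (a | a) (b | b) h
    · exact h.symm
    · exact h
    · exact h
    · exact h.elim⟩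
  loopless := ⟨by
    rintro (a | a) h
    · exact H.irrefl h
    · exact h.elim⟩

theorem neighborSet_completeGraph_nontrivial {α : Type*} [Finite α] (h : 3 ≤ Nat.card α)
    (w : α) : ((completeGraph α).neighborSet w).Nontrivial := by
  rw [← Set.one_lt_ncard_iff_nontrivial, neighborSet_top, Set.ncard_compl, Set.ncard_singleton]
  omega

theorem neighborSet_completeBipartiteGraph_nontrivial {α β : Type*} [Nontrivial α]
    [Nontrivial β] (w : α ⊕ β) : ((completeBipartiteGraph α β).neighborSet w).Nontrivial := by
  rcases w with a | b
  · obtain ⟨b₁, b₂, hb⟩ := exists_pair_ne β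
    exact ⟨.inr b₁, by simp, .inr b₂, by simp, by simpa using hb⟩
  · obtain ⟨a₁, a₂, ha⟩ := exists_pair_ne α
    exact ⟨.inl a₁, by simp, .inl a₂, by simp, by simpa using ha⟩

theorem withPendants_adj_inr {a : W} {x : W ⊕ W} :
    (withPendants H).Adj (.inr a) x ↔ x = .inl a := by
  rcases x with b | b
  · exact ⟨fun h => congrArg _ h, fun h => Sum.inl_injective h⟩
  · exact ⟨False.elim, fun h => Sum.inr_ne_inl h |>.elim⟩

theorem not_isMinorOf_withPendants_induce {U : Type*} {J : SimpleGraph U}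
    (hJ : ∀ w, (J.neighborSet w).Nontrivial) (u : W)
    (h : ¬ J.IsMinorOf (H.induce {v | v ≠ u})) :
    ¬ J.IsMinorOf ((withPendants H).induce {v | v ≠ .inl u}) := by
  intro hJX
  obtain ⟨φ, hφ⟩ := isMinorOf_iff_exists_isMinorModel.1 hJX
  let P : Set {v : W ⊕ W | v ≠ .inl u} := Subtype.val ⁻¹' Set.range .inr
  have hP : ∀ p ∈ P, (((withPendants H).induce {v | v ≠ .inl u}).neighborSet p).Subsingleton := by
    rintro ⟨_, _⟩ ⟨y, rfl⟩ a ha b hb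
    exact Subtype.ext ((withPendants_adj_inr.1 ha).trans (withPendants_adj_inr.1 hb).symm)
  have hPind : ((withPendants H).induce {v | v ≠ .inl u}).IsIndepSet P := by
    rintro ⟨_, _⟩ ⟨y, rfl⟩ ⟨_, _⟩ ⟨z, rfl⟩ - hyz
    exact hyz
  let f : H.induce {v | v ≠ u} ↪g (withPendants H).induce {v | v ≠ .inl u} :=
    { toFun := fun v => ⟨.inl v, fun h => v.2 (Sum.inl_injective h)⟩
      inj' := fun v w hvw => Subtype.ext (Sum.inl_injective (Subtype.mk.inj hvw))
      map_rel_iff' := Iff.rfl }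
  refine h (hφ.isMinorOf_of_simplicial (fun p hp => IsClique.of_subsingleton (hP p hp)) hPind
    (hφ.diff_nonempty_of_subsingleton hP hPind hJ) f ?_)
  rintro ⟨v | v, hv⟩ hvP
  · exact ⟨⟨v, fun h => hv (congrArg _ h)⟩, rfl⟩
  · exact (hvP ⟨v, rfl⟩).elim

theorem IsApex.withPendants (h : H.IsApex) : (withPendants H).IsApex := by
  obtain ⟨u, hK₅, hK₃₃⟩ := h
  exact ⟨.inl u,
    not_isMinorOf_withPendants_induce (neighborSet_completeGraph_nontrivial (by simp)) u hK₅,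
    not_isMinorOf_withPendants_induce neighborSet_completeBipartiteGraph_nontrivial u hK₃₃⟩

theorem IsMinorModel.of_withPendants {φ : W ⊕ W → Set V}
    (h : (withPendants H).IsMinorModel X φ) :
    H.IsMinorModel X fun w => φ (.inl w) ∪ φ (.inr w) where
  nonempty w := (h.nonempty _).inl
  connected w := by
    obtain ⟨u, hu, v, hv, huv⟩ := h.exists_adj (.inl w) (.inr w) rfl
    exact connected_induce_union (h.connected _).preconnected (h.connected _).preconnected
      hu hv huv
  pairwise_disjoint w w' hww' := by
    simp only [Set.disjoint_union_left, Set.disjoint_union_right]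
    exact ⟨⟨h.pairwise_disjoint (by simpa), h.pairwise_disjoint (by simp)⟩,
      ⟨h.pairwise_disjoint (by simp), h.pairwise_disjoint (by simpa)⟩⟩
  exists_adj w w' hww' := by
    obtain ⟨u, hu, v, hv, huv⟩ := h.exists_adj (.inl w) (.inl w') hww'
    exact ⟨u, .inl hu, v, .inl hv, huv⟩

theorem IsMinorModel.union_pendant_diff_nonempty {φ : W ⊕ W → Set V}
    (h : (withPendants H).IsMinorModel X φ) {P : Set V} (hP : X.IsIndepSet P) (w : W) :
    ((φ (.inl w) ∪ φ (.inr w)) \ P).Nonempty := by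
  obtain ⟨u, hu, v, hv, huv⟩ := h.exists_adj (.inl w) (.inr w) rfl
  by_cases huP : u ∈ P
  · exact ⟨v, .inr hv, fun hvP => hP huP hvP huv.ne huv⟩
  · exact ⟨u, .inl hu, huP⟩

theorem IsMinorOf.of_withPendants_cliqueExtensionGraph {G : SimpleGraph V}
    (h : (withPendants H).IsMinorOf (cliqueExtensionGraph G)) : H.IsMinorOf G := by
  obtain ⟨φ, hφ⟩ := isMinorOf_iff_exists_isMinorModel.1 h
  have hPind : (cliqueExtensionGraph G).IsIndepSet (Set.range .inr) := by
    rintro _ ⟨A, rfl⟩ _ ⟨B, rfl⟩ - hAB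
    exact hAB
  have hP : ∀ p ∈ Set.range .inr,
      (cliqueExtensionGraph G).IsClique ((cliqueExtensionGraph G).neighborSet p) := by
    rintro _ ⟨A, rfl⟩ (a | B) ha (b | C) hb hab
    · exact A.2.2 ha hb fun h => hab (congrArg _ h)
    all_goals first | exact ha.elim | exact hb.elim
  let f : G ↪g cliqueExtensionGraph G := { toEmbedding := .inl, map_rel_iff' := Iff.rfl }
  refine hφ.of_withPendants.isMinorOf_of_simplicial hP hPind
    (hφ.union_pendant_diff_nonempty hPind) f ?_
  rintro (v | A) hv
  · exact ⟨v, rfl⟩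
  · exact (hv ⟨A, rfl⟩).elim

end Pendants

end SimpleGraph

/-- For every apex graph `K` there is an apex graph `K'` such that: if `G` is
`K`-minor-free and `G'` is obtained from `G` by adding, for every nonempty clique `A` of
`G`, a new vertex whose neighborhood is exactly `A`, then `G'` is `K'`-minor-free. -/
theorem clique_extension_minor_free
    {W : Type} [Fintype W] (K : SimpleGraph W) (hK : K.IsApex) :
    ∃ (m : ℕ) (K' : SimpleGraph (Fin m)), K'.IsApex ∧
      ∀ (V : Type) [Fintype V] (G : SimpleGraph V),
        ¬ K.IsMinorOf G → ¬ K'.IsMinorOf (cliqueExtensionGraph G) := by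
  let e := Iso.map (Fintype.equivFin (W ⊕ W)) (withPendants K)
  refine ⟨_, _, hK.withPendants.of_iso e, fun V _ G hG hG' => hG ?_⟩
  exact (hG'.of_injective_hom e.toHom e.injective).of_withPendants_cliqueExtensionGraph
end
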